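/- For every integer ρ ≥ 1, the set ℝ^ρ ∖ {0} can be written as a union of at most 7^ρ subsets (cones) such that any two nonzero vectors u, v lying in the same subset satisfy ⟨u, v⟩ ≥ (3/4) |u| |v|, where ⟨·,·⟩ is the standard inner product and |·| the Euclidean norm. -/

import Mathlib

/-!
Take a maximal `1/3`-separated set of unit vectors. The balls of radius `1/6` around its points
are disjoint and lie in the ball of radius `7/6`, so by volume it has at most `7 ^ ρ` points, and by
maximality every unit vector lies within `1/3` of one of them. The cones are the nonzero vectors
whose direction is within `1/3` of a given point: two unit vectors within `2/3` of each other have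
inner product at least `1 - (2/3)^2 / 2 = 7/9 ≥ 3/4`.
-/

open Metric MeasureTheory Module
open scoped NNReal ENNReal

lemma Metric.IsSeparated.lt_dist {X : Type*} [PseudoMetricSpace X] {ε : ℝ≥0} {C : Set X}
    (hC : IsSeparated ε C) {p q : X} (hp : p ∈ C) (hq : q ∈ C) (hpq : p ≠ q) :
    (ε : ℝ) < dist p q := by
  simpa [edist_dist, ENNReal.coe_lt_ofReal] using hC hp hq hpq

section Packing

variable {E : Type*} [NormedAddCommGroup E] [NormedSpace ℝ E] [FiniteDimensional ℝ E]

/-- The disjoint balls of radius `ε / 2` around the points of `s` lie in the ball of radius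
`R + ε / 2` around `x`. -/
lemma Finset.card_le_of_isSeparated_of_subset_closedBall {ε : ℝ≥0} (hε : ε ≠ 0) {R : ℝ}
    (hR : 0 ≤ R) {x : E} {s : Finset E} (hs : IsSeparated ε (s : Set E))
    (hsR : (s : Set E) ⊆ closedBall x R) :
    (s.card : ℝ) ≤ (1 + 2 * R / ε) ^ finrank ℝ E := by
  borelize E
  set μ : Measure E := Measure.addHaar
  set r : ℝ := ε / 2
  have hr : 0 < r := by positivity
  have hV : 0 < μ.real (ball 0 1) :=
    ENNReal.toReal_pos (measure_ball_pos μ 0 one_pos).ne' measure_ball_lt_top.ne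
  have hμball : ∀ (y : E) {t : ℝ}, 0 < t →
      μ.real (ball y t) = t ^ finrank ℝ E * μ.real (ball 0 1) := by
    intro y t ht
    rw [measureReal_def, Measure.addHaar_ball_of_pos μ y ht, ENNReal.toReal_mul,
      ENNReal.toReal_ofReal (by positivity), measureReal_def]
  have hdisj : (s : Set E).PairwiseDisjoint (ball · r) := fun p hp q hq hpq =>
    ball_disjoint_ball (by rw [add_halves]; exact (hs.lt_dist hp hq hpq).le)
  have hsub : (⋃ p ∈ s, ball p r) ⊆ ball x (R + r) :=
    Set.iUnion₂_subset fun p hp => ball_subset_ball' (by linarith [mem_closedBall.1 (hsR hp)])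
  have hvol : s.card * (r ^ finrank ℝ E * μ.real (ball 0 1))
      ≤ (R + r) ^ finrank ℝ E * μ.real (ball 0 1) :=
    calc s.card * (r ^ finrank ℝ E * μ.real (ball 0 1))
        = ∑ p ∈ s, μ.real (ball p r) := by simp [hμball _ hr]
      _ = μ.real (⋃ p ∈ s, ball p r) :=
          (measureReal_biUnion_finset hdisj (fun _ _ => measurableSet_ball)).symm
      _ ≤ μ.real (ball x (R + r)) := measureReal_mono hsub measure_ball_lt_top.ne
      _ = (R + r) ^ finrank ℝ E * μ.real (ball 0 1) := hμball x (by positivity)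
  have hratio : 1 + 2 * R / ε = (R + r) / r := by field_simp; ring
  rw [hratio, div_pow, le_div_iff₀ (by positivity)]
  nlinarith

lemma Metric.IsSeparated.finite_of_subset_closedBall {ε : ℝ≥0} (hε : ε ≠ 0) {R : ℝ}
    (hR : 0 ≤ R) {x : E} {C : Set E} (hC : IsSeparated ε C) (hCR : C ⊆ closedBall x R) :
    C.Finite := by
  by_contra hinf
  obtain ⟨t, htC, htcard⟩ :=
    Set.Infinite.exists_subset_card_eq hinf (⌊(1 + 2 * R / ε) ^ finrank ℝ E⌋₊ + 1)
  have := t.card_le_of_isSeparated_of_subset_closedBall hε hR (hC.subset htC) (htC.trans hCR)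
  rw [htcard, Nat.cast_add_one] at this
  linarith [Nat.lt_floor_add_one ((1 + 2 * R / ε) ^ finrank ℝ E)]

lemma Metric.packingNumber_le_of_subset_closedBall {ε : ℝ≥0} (hε : ε ≠ 0) {R : ℝ}
    (hR : 0 ≤ R) {x : E} {A : Set E} (hA : A ⊆ closedBall x R) :
    packingNumber ε A ≤ ⌊(1 + 2 * R / ε) ^ finrank ℝ E⌋₊ := by
  refine iSup₂_le fun C hCA => iSup_le fun hC => ?_
  have hfin := hC.finite_of_subset_closedBall hε hR (hCA.trans hA)
  rw [hfin.encard_eq_coe_toFinset_card, Nat.cast_le]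
  exact Nat.le_floor <| Finset.card_le_of_isSeparated_of_subset_closedBall hε hR
    (by simpa using hC) (by simpa using hCA.trans hA)

/-- A maximal `ε`-separated subset of `A` is an `ε`-net of `A`. -/
lemma Metric.exists_fin_cover_closedBall_of_subset_closedBall {ε : ℝ≥0} (hε : ε ≠ 0) {R : ℝ}
    (hR : 0 ≤ R) {x : E} {A : Set E} (hA : A ⊆ closedBall x R) :
    ∃ (n : ℕ) (c : Fin n → E), n ≤ ⌊(1 + 2 * R / ε) ^ finrank ℝ E⌋₊ ∧
      A ⊆ ⋃ i, closedBall (c i) ε := by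
  have hpack := packingNumber_le_of_subset_closedBall hε hR hA
  have hne : packingNumber ε A ≠ ⊤ := ne_top_of_le_ne_top (ENat.natCast_ne_top _) hpack
  have hfin : (maximalSeparatedSet ε A).Finite :=
    Set.encard_ne_top_iff.mp (encard_maximalSeparatedSet hne ▸ hne)
  obtain ⟨n, c, hc⟩ := hfin.fin_embedding
  refine ⟨n, c, ?_, ?_⟩
  · have hn : (n : ℕ∞) = packingNumber ε A := by
      rw [← encard_maximalSeparatedSet hne, ← hc, ← Set.image_univ, c.injective.encard_image]
      simp
    exact_mod_cast hn ▸ hpack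
  · rw [← Set.biUnion_range (f := c) (g := (closedBall · ε)), hc]
    exact isCover_iff_subset_iUnion_closedBall.1 (isCover_maximalSeparatedSet hne)

end Packing

section Cones

variable {E : Type*} [NormedAddCommGroup E] [InnerProductSpace ℝ E]

def directionCone (p : E) (r : ℝ) : Set E := {x | x ≠ 0 ∧ ‖x‖⁻¹ • x ∈ closedBall p r}

lemma one_sub_sq_div_two_le_real_inner {u v : E} (hu : ‖u‖ = 1) (hv : ‖v‖ = 1) {δ : ℝ}
    (huv : ‖u - v‖ ≤ δ) : 1 - δ ^ 2 / 2 ≤ inner ℝ u v := by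
  have := norm_sub_sq_real u v
  rw [hu, hv] at this
  nlinarith [norm_nonneg (u - v)]

lemma mul_norm_mul_norm_le_real_inner_of_mem_directionCone {p : E} {r : ℝ} {u v : E}
    (hu : u ∈ directionCone p r) (hv : v ∈ directionCone p r) :
    (1 - 2 * r ^ 2) * ‖u‖ * ‖v‖ ≤ inner ℝ u v := by
  obtain ⟨hu0, hup⟩ := hu
  obtain ⟨hv0, hvp⟩ := hv
  have hdist : ‖‖u‖⁻¹ • u - ‖v‖⁻¹ • v‖ ≤ 2 * r := by
    rw [← dist_eq_norm, two_mul]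
    exact (dist_triangle_right _ _ p).trans (add_le_add hup hvp)
  have hinner := one_sub_sq_div_two_le_real_inner (u := ‖u‖⁻¹ • u) (v := ‖v‖⁻¹ • v)
    (norm_smul_inv_norm hu0) (norm_smul_inv_norm hv0) hdist
  rw [real_inner_smul_left, real_inner_smul_right] at hinner
  have hu' : 0 < ‖u‖ := norm_pos_iff.2 hu0
  have hv' : 0 < ‖v‖ := norm_pos_iff.2 hv0
  calc (1 - 2 * r ^ 2) * ‖u‖ * ‖v‖ = (1 - (2 * r) ^ 2 / 2) * (‖u‖ * ‖v‖) := by ring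
    _ ≤ ‖u‖⁻¹ * (‖v‖⁻¹ * inner ℝ u v) * (‖u‖ * ‖v‖) := by gcongr
    _ = inner ℝ u v := by field_simp

lemma iUnion_directionCone_eq {ι : Type*} {c : ι → E} {r : ℝ}
    (hc : sphere (0 : E) 1 ⊆ ⋃ i, closedBall (c i) r) :
    ⋃ i, directionCone (c i) r = {x | x ≠ 0} := by
  ext x
  simp only [Set.mem_iUnion, Set.mem_ofPred_eq]
  refine ⟨fun ⟨_, hx, _⟩ => hx, fun hx => ?_⟩
  obtain ⟨i, hi⟩ := Set.mem_iUnion.1 <|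
    hc (mem_sphere_zero_iff_norm.2 (norm_smul_inv_norm (𝕜 := ℝ) hx))
  exact ⟨i, hx, hi⟩

end Cones

theorem cone_decomposition_general (ρ : ℕ) :
    ∃ (n : ℕ) (c : Fin n → Set (EuclideanSpace ℝ (Fin ρ))),
      n ≤ 7 ^ ρ ∧
      (⋃ i, c i) = {x : EuclideanSpace ℝ (Fin ρ) | x ≠ 0} ∧
      ∀ i, ∀ u ∈ c i, ∀ v ∈ c i,
        (3 / 4 : ℝ) * ‖u‖ * ‖v‖ ≤ inner ℝ u v := by
  obtain ⟨n, c, hn, hc⟩ := exists_fin_cover_closedBall_of_subset_closedBall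
    (x := (0 : EuclideanSpace ℝ (Fin ρ))) (ε := 1 / 3) (by norm_num) zero_le_one
    sphere_subset_closedBall
  refine ⟨n, fun i => directionCone (c i) (1 / 3), ?_, iUnion_directionCone_eq hc, ?_⟩
  · have h7 : (1 + 2 * 1 / ((1 / 3 : ℝ≥0) : ℝ)) ^ finrank ℝ (EuclideanSpace ℝ (Fin ρ)) =
        ((7 ^ ρ : ℕ) : ℝ) := by
      norm_num [finrank_euclideanSpace_fin]
    rwa [h7, Nat.floor_natCast] at hn
  · intro i u hu v hv
    calc (3 / 4 : ℝ) * ‖u‖ * ‖v‖ ≤ (1 - 2 * (1 / 3) ^ 2) * ‖u‖ * ‖v‖ := by gcongr; norm_num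
      _ ≤ inner ℝ u v := mul_norm_mul_norm_le_real_inner_of_mem_directionCone hu hv

theorem cone_decomposition (ρ : ℕ) (hρ : 1 ≤ ρ) :
    ∃ (n : ℕ) (c : Fin n → Set (EuclideanSpace ℝ (Fin ρ))),
      n ≤ 7 ^ ρ ∧
      (⋃ i, c i) = {x : EuclideanSpace ℝ (Fin ρ) | x ≠ 0} ∧
      ∀ i, ∀ u ∈ c i, ∀ v ∈ c i,
        (3 / 4 : ℝ) * ‖u‖ * ‖v‖ ≤ inner ℝ u v :=
  cone_decomposition_general ρ
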